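/- Let π = 15342 ∈ S_5 (the transposition exchanging 2 and 5). Then η_5(π)(n_λ) = −n_λ for exactly the edges λ ∈ {25, 13, 14, 34}, and there is no other edge λ with η_5(π)(n_λ) = ±n_λ; the four vectors n_25, n_13, n_14, n_34 satisfy the linear relation n_25 + n_13 = n_14 + n_34 and span a 3-dimensional subspace; and the trace of η_5(π) restricted to the span of all ten vectors n_λ (λ ∈ Λ) equals −1. -/

import Mathlib

open Equiv

/-- XOR on `Fin 4` (the Klein group structure on vertices of a tetrahedron). -/
def xor4 (a b : Fin 4) : Fin 4 :=
  ⟨(a.val ^^^ b.val) % 4, Nat.mod_lt _ (by norm_num)⟩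

/-- The underlying function of the cross-ratio homomorphism `φ : S₄ → S₃`:
a permutation of the vertices `{0,1,2,3}` of a tetrahedron induces a permutation of the
three partitions of the vertex set into two pairs of opposite edges; the partition pairing
`0` with `j+1` is indexed by `j : Fin 3`. -/
def phiFun (π : Perm (Fin 4)) (j : Fin 3) : Fin 3 :=
  ⟨(xor4 (π 0) (π ⟨j.val + 1, by omega⟩)).val - 1, by
    have h := (xor4 (π 0) (π ⟨j.val + 1, by omega⟩)).isLt
    omega⟩

lemma phiFun_leftInv : ∀ (π : Perm (Fin 4)) (j : Fin 3), phiFun π⁻¹ (phiFun π j) = j := by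
  decide

/-- The cross-ratio homomorphism `φ : S₄ → S₃`. -/
def phi (π : Perm (Fin 4)) : Perm (Fin 3) where
  toFun := phiFun π
  invFun := phiFun π⁻¹
  left_inv := phiFun_leftInv π
  right_inv := fun j => by simpa using phiFun_leftInv π⁻¹ j

/-- Restriction of a permutation `π` to a bijection between the complement of `{i}`
and the complement of `{π i}`. -/
def restrictPerm {k : ℕ} (π : Perm (Fin k)) (i : Fin k) :
    {x : Fin k // x ≠ i} ≃ {x : Fin k // x ≠ π i} where
  toFun x := ⟨π x.1, fun h => x.2 (π.injective h)⟩
  invFun y := ⟨π.symm y.1, fun h => y.2 (by simpa using congrArg π h)⟩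
  left_inv x := Subtype.ext (π.symm_apply_apply x.1)
  right_inv y := Subtype.ext (π.apply_symm_apply y.1)

/-- The induced permutation `π_i ∈ S_k` of `π ∈ S_{k+1}`: the restriction of `π` to the
complement of `{i}`, reindexed via the order preserving identifications with `Fin k`. -/
def inducedPerm {k : ℕ} (π : Perm (Fin (k + 1))) (i : Fin (k + 1)) : Perm (Fin k) :=
  ((finSuccAboveEquiv i).trans ((restrictPerm π i).trans (finSuccAboveEquiv (π i)).symm))

/-- `η₄ : S₄ → Aut(V⁴)`, `V⁴ = ℝ³`: the signed cross-ratio representation,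
`η₄(π)(e_j) = sign(π) e_{φ(π) j}`. -/
noncomputable def eta4fun (π : Equiv.Perm (Fin 4)) (v : Fin 3 → ℝ) : Fin 3 → ℝ :=
  fun j => ((Equiv.Perm.sign π : ℤ) : ℝ) * v ((phi π)⁻¹ j)

/-- The canonical representation `η₅ : S₅ → Aut(V⁵)` on the space `V⁵` of `5 × 3`
real matrices: `η₅(π)(e_i ⊗ u) = e_{π(i)} ⊗ η₄(π_i)(u)`. -/
noncomputable def eta5fun (π : Equiv.Perm (Fin 5)) (v : Fin 5 → Fin 3 → ℝ) :
    Fin 5 → Fin 3 → ℝ :=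
  fun i => eta4fun (inducedPerm π (π⁻¹ i)) (v (π⁻¹ i))

/-- `η₅(π)` as a linear endomorphism of `V⁵`. -/
noncomputable def eta5lin (π : Equiv.Perm (Fin 5)) :
    (Fin 5 → Fin 3 → ℝ) →ₗ[ℝ] (Fin 5 → Fin 3 → ℝ) where
  toFun := eta5fun π
  map_add' := by
    intro v w; funext i j; simp [eta5fun, eta4fun, mul_add]
  map_smul' := by
    intro c v; funext i j; simp [eta5fun, eta4fun, smul_eq_mul]; ring

/-- Coefficient matrices of the ten characteristic functionals `r_λ`, `λ` an edge of
`{1,…,5}` (0-indexed: rows `1,…,5` become `0,…,4`, columns `(a,b,c)` become `(0,1,2)`).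
`rc p q` is the coefficient matrix of `r_{(p+1)(q+1)}` for `p < q`, and `0` otherwise. -/
def rc : Fin 5 → Fin 5 → Fin 5 → Fin 3 → ℝ :=
  -- r₁₂ = −a₃+a₄−a₅, r₁₃ = −a₂−b₄+b₅, r₁₄ = b₂−b₃−c₅, r₁₅ = −c₂+c₃−c₄,
  -- r₂₃ = −a₁+c₄−c₅, r₂₄ = b₁+c₃+b₅, r₂₅ = −c₁−b₃+b₄,
  -- r₃₄ = −c₁+c₂−a₅, r₃₅ = b₁−b₂−a₄, r₄₅ = −a₁+a₂−a₃
  ![![0,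
     ![![0,0,0], ![0,0,0], ![-1,0,0], ![1,0,0], ![-1,0,0]],
     ![![0,0,0], ![-1,0,0], ![0,0,0], ![0,-1,0], ![0,1,0]],
     ![![0,0,0], ![0,1,0], ![0,-1,0], ![0,0,0], ![0,0,-1]],
     ![![0,0,0], ![0,0,-1], ![0,0,1], ![0,0,-1], ![0,0,0]]],
    ![0, 0,
     ![![-1,0,0], ![0,0,0], ![0,0,0], ![0,0,1], ![0,0,-1]],
     ![![0,1,0], ![0,0,0], ![0,0,1], ![0,0,0], ![0,1,0]],
     ![![0,0,-1], ![0,0,0], ![0,-1,0], ![0,1,0], ![0,0,0]]],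
    ![0, 0, 0,
     ![![0,0,-1], ![0,0,1], ![0,0,0], ![0,0,0], ![-1,0,0]],
     ![![0,1,0], ![0,-1,0], ![0,0,0], ![-1,0,0], ![0,0,0]]],
    ![0, 0, 0, 0,
     ![![-1,0,0], ![1,0,0], ![-1,0,0], ![0,0,0], ![0,0,0]]],
    ![0, 0, 0, 0, 0]]

/-- The characteristic functional `r_λ : V⁵ → ℝ` for the edge `λ = {p,q}`, `p < q`. -/
def rfun (p q : Fin 5) (v : Fin 5 → Fin 3 → ℝ) : ℝ :=
  ∑ i, ∑ j, rc p q i j * v i j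

/-- The normal vector `n_λ ∈ L₅` of the hyperplane `r_λ = 0`: the orthogonal projection
of `3v_λ` to `L₅`, where `v_λ` is the coefficient matrix of `r_λ`. -/
def nvec (p q : Fin 5) : Fin 5 → Fin 3 → ℝ :=
  fun i j => 3 * rc p q i j - (rc p q i 0 + rc p q i 1 + rc p q i 2)

/-- The span of all ten normal vectors `n_λ`, `λ ∈ Λ`. -/
def Nspan : Submodule ℝ (Fin 5 → Fin 3 → ℝ) :=
  Submodule.span ℝ {x | ∃ p q : Fin 5, p < q ∧ x = nvec p q}

/-! The transposition `π = (2 5)` acts on the ten normals by a signed permutation: it negates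
`n₂₅, n₁₃, n₁₄, n₃₄` and exchanges `n₁₂ ↔ n₁₅`, `n₂₃ ↔ n₃₅`, `n₂₄ ↔ n₄₅`. A moved `n_λ` has
exactly one endpoint of `λ` in `{2, 5}`, so it vanishes on one of the rows `2, 5` but not on the
other, while `η₅(π)` exchanges these two rows (up to sign and a permutation of the columns);
hence `η₅(π) n_λ ≠ ± n_λ`. The ten normals span a 5-dimensional space with the eigenbasis
`n₂₅, n₁₃, n₁₄` (eigenvalue `-1`) and `n₁₂ + n₁₅`, `n₂₃ + n₃₅` (eigenvalue `1`), so the trace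
is `-3 + 2 = -1`. -/

section TraceOfEigenbasis

variable {R M ι : Type*} [CommRing R] [AddCommGroup M] [Module R M] [Fintype ι]

theorem trace_restrict_eq_sum_of_eigenvectors {f : M →ₗ[R] M} {N : Submodule R M}
    (hf : ∀ v ∈ N, f v ∈ N) {b : ι → M} (hb : LinearIndependent R b)
    (hN : Submodule.span R (Set.range b) = N) {c : ι → R} (hc : ∀ i, f (b i) = c i • b i) :
    LinearMap.trace R N (f.restrict hf) = ∑ i, c i := by
  classical
  subst hN
  let B := Module.Basis.span hb
  have hB : ∀ i, f.restrict hf (B i) = c i • B i := fun i =>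
    Subtype.ext (by simp [B, Module.Basis.span_apply, hc])
  rw [LinearMap.trace_eq_matrix_trace R B, Matrix.trace]
  refine Finset.sum_congr rfl fun i _ => ?_
  simp [LinearMap.toMatrix_apply, hB]

end TraceOfEigenbasis

theorem ne_and_ne_neg_of_apply_eq_zero {α β G : Type*} [NegZeroClass G] {v w : α → β → G}
    (i : α) (j : β) (hv : v i j = 0) (hw : w i j ≠ 0) : w ≠ v ∧ w ≠ -v := by
  constructor <;> rintro rfl <;> simp_all

theorem eta5fun_swap14 (v : Fin 5 → Fin 3 → ℝ) :
    eta5fun (swap 1 4) v =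
      ![-![v 0 1, v 0 0, v 0 2], ![v 4 1, v 4 2, v 4 0], -![v 2 2, v 2 1, v 2 0],
        -![v 3 2, v 3 1, v 3 0], ![v 1 2, v 1 0, v 1 1]] := by
  have hinv : ∀ i : Fin 5, (swap 1 4 : Perm (Fin 5))⁻¹ i = ![0, 4, 2, 3, 1] i := by decide
  have hsign : ∀ i : Fin 5, (Perm.sign (inducedPerm (swap 1 4 : Perm (Fin 5)) i) : ℤ) =
      ![-1, 1, -1, -1, 1] i := by decide
  have hphi : ∀ (i : Fin 5) (j : Fin 3), (phi (inducedPerm (swap 1 4 : Perm (Fin 5)) i))⁻¹ j =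
      ![![1, 0, 2], ![2, 0, 1], ![2, 1, 0], ![2, 1, 0], ![1, 2, 0]] i j := by decide
  funext i j
  simp only [eta5fun, eta4fun, hinv]
  fin_cases i <;> fin_cases j <;> simp [hsign, hphi]

theorem nvec_0_1 :
    nvec 0 1 = ![![0, 0, 0], ![0, 0, 0], ![-2, 1, 1], ![2, -1, -1], ![-2, 1, 1]] := by
  funext i j; fin_cases i <;> fin_cases j <;> simp [nvec, rc] <;> norm_num

theorem nvec_0_2 :
    nvec 0 2 = ![![0, 0, 0], ![-2, 1, 1], ![0, 0, 0], ![1, -2, 1], ![-1, 2, -1]] := by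
  funext i j; fin_cases i <;> fin_cases j <;> simp [nvec, rc] <;> norm_num

theorem nvec_0_3 :
    nvec 0 3 = ![![0, 0, 0], ![-1, 2, -1], ![1, -2, 1], ![0, 0, 0], ![1, 1, -2]] := by
  funext i j; fin_cases i <;> fin_cases j <;> simp [nvec, rc] <;> norm_num

theorem nvec_0_4 :
    nvec 0 4 = ![![0, 0, 0], ![1, 1, -2], ![-1, -1, 2], ![1, 1, -2], ![0, 0, 0]] := by
  funext i j; fin_cases i <;> fin_cases j <;> simp [nvec, rc] <;> norm_num

theorem nvec_1_2 :
    nvec 1 2 = ![![-2, 1, 1], ![0, 0, 0], ![0, 0, 0], ![-1, -1, 2], ![1, 1, -2]] := by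
  funext i j; fin_cases i <;> fin_cases j <;> simp [nvec, rc] <;> norm_num

theorem nvec_1_3 :
    nvec 1 3 = ![![-1, 2, -1], ![0, 0, 0], ![-1, -1, 2], ![0, 0, 0], ![-1, 2, -1]] := by
  funext i j; fin_cases i <;> fin_cases j <;> simp [nvec, rc] <;> norm_num

theorem nvec_1_4 :
    nvec 1 4 = ![![1, 1, -2], ![0, 0, 0], ![1, -2, 1], ![-1, 2, -1], ![0, 0, 0]] := by
  funext i j; fin_cases i <;> fin_cases j <;> simp [nvec, rc] <;> norm_num

theorem nvec_2_3 :
    nvec 2 3 = ![![1, 1, -2], ![-1, -1, 2], ![0, 0, 0], ![0, 0, 0], ![-2, 1, 1]] := by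
  funext i j; fin_cases i <;> fin_cases j <;> simp [nvec, rc] <;> norm_num

theorem nvec_2_4 :
    nvec 2 4 = ![![-1, 2, -1], ![1, -2, 1], ![0, 0, 0], ![-2, 1, 1], ![0, 0, 0]] := by
  funext i j; fin_cases i <;> fin_cases j <;> simp [nvec, rc] <;> norm_num

theorem nvec_3_4 :
    nvec 3 4 = ![![-2, 1, 1], ![2, -1, -1], ![-2, 1, 1], ![0, 0, 0], ![0, 0, 0]] := by
  funext i j; fin_cases i <;> fin_cases j <;> simp [nvec, rc] <;> norm_num

theorem nvec_1_4_add_nvec_0_2 : nvec 1 4 + nvec 0 2 = nvec 0 3 + nvec 2 3 := by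
  simp [nvec_1_4, nvec_0_2, nvec_0_3, nvec_2_3]; norm_num

theorem eta5fun_swap14_nvec_fixed :
    eta5fun (swap 1 4) (nvec 1 4) = -nvec 1 4 ∧ eta5fun (swap 1 4) (nvec 0 2) = -nvec 0 2 ∧
      eta5fun (swap 1 4) (nvec 0 3) = -nvec 0 3 ∧ eta5fun (swap 1 4) (nvec 2 3) = -nvec 2 3 := by
  refine ⟨?_, ?_, ?_, ?_⟩ <;> simp [eta5fun_swap14, nvec_1_4, nvec_0_2, nvec_0_3, nvec_2_3]

theorem eta5fun_swap14_nvec_ne {p q : Fin 5} (hpq : p < q)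
    (hmoved : ¬((p, q) = (1, 4) ∨ (p, q) = (0, 2) ∨ (p, q) = (0, 3) ∨ (p, q) = (2, 3))) :
    eta5fun (swap 1 4) (nvec p q) ≠ nvec p q ∧ eta5fun (swap 1 4) (nvec p q) ≠ -(nvec p q) := by
  -- the row of the endpoint of the edge in `{1, 4}`, on which `nvec p q` vanishes
  refine ne_and_ne_neg_of_apply_eq_zero (if p = 1 ∨ q = 1 then 1 else 4) 0 ?_ ?_ <;>
    fin_cases p <;> fin_cases q <;> (try exact absurd hpq (by decide)) <;>
    (try exact absurd (by decide) hmoved) <;>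
    simp [eta5fun_swap14, nvec_0_1, nvec_0_4, nvec_1_2, nvec_1_3, nvec_2_4, nvec_3_4]

def swapEigenbasis : Fin 5 → Fin 5 → Fin 3 → ℝ :=
  ![nvec 1 4, nvec 0 2, nvec 0 3, nvec 0 1 + nvec 0 4, nvec 1 2 + nvec 2 4]

theorem eta5fun_swap14_swapEigenbasis (k : Fin 5) :
    eta5fun (swap 1 4) (swapEigenbasis k) =
      (![-1, -1, -1, 1, 1] : Fin 5 → ℝ) k • swapEigenbasis k := by
  fin_cases k <;> simp [eta5fun_swap14, swapEigenbasis, nvec_1_4, nvec_0_2, nvec_0_3, nvec_0_1,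
    nvec_0_4, nvec_1_2, nvec_2_4]

theorem linearIndependent_swapEigenbasis : LinearIndependent ℝ swapEigenbasis := by
  rw [Fintype.linearIndependent_iff]
  intro g hg
  simp [Fin.sum_univ_five, swapEigenbasis, nvec_1_4, nvec_0_2, nvec_0_3, nvec_0_1, nvec_0_4,
    nvec_1_2, nvec_2_4] at hg
  obtain ⟨⟨h00, -, h02⟩, ⟨h10, h11, -⟩, ⟨-, h21, -⟩, -⟩ := hg
  intro k
  fin_cases k <;> simp <;> linarith

theorem nvec_mem_span_swapEigenbasis {p q : Fin 5} (hpq : p < q) :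
    nvec p q ∈ Submodule.span ℝ (Set.range swapEigenbasis) := by
  rw [Submodule.mem_span_range_iff_exists_fun]
  refine ⟨![![0, ![0, 1/2, -1/2, 1/2, 0], ![0, 1, 0, 0, 0], ![0, 0, 1, 0, 0],
      ![0, -1/2, 1/2, 1/2, 0]],
    ![0, 0, ![-1/2, 0, 1/2, 0, 1/2], ![1/2, 1/2, 0, 1/2, 1/2], ![1, 0, 0, 0, 0]],
    ![0, 0, 0, ![1, 1, -1, 0, 0], ![1/2, 0, -1/2, 0, 1/2]],
    ![0, 0, 0, 0, ![-1/2, -1/2, 0, 1/2, 1/2]],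
    0] p q, ?_⟩
  fin_cases p <;> fin_cases q <;> (try exact absurd hpq (by decide)) <;>
    simp [Fin.sum_univ_five, swapEigenbasis, nvec_0_1, nvec_0_2, nvec_0_3, nvec_0_4, nvec_1_2,
      nvec_1_3, nvec_1_4, nvec_2_3, nvec_2_4, nvec_3_4] <;> norm_num

theorem span_swapEigenbasis : Submodule.span ℝ (Set.range swapEigenbasis) = Nspan := by
  apply le_antisymm
  · rw [Submodule.span_le]
    rintro _ ⟨k, rfl⟩
    fin_cases k
    all_goals first
      | exact Submodule.subset_span ⟨_, _, by decide, rfl⟩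
      | exact add_mem (Submodule.subset_span ⟨_, _, by decide, rfl⟩)
          (Submodule.subset_span ⟨_, _, by decide, rfl⟩)
  · rw [Nspan, Submodule.span_le]
    rintro _ ⟨p, q, hpq, rfl⟩
    exact nvec_mem_span_swapEigenbasis hpq

theorem finrank_span_nvec_fixed :
    Module.finrank ℝ (Submodule.span ℝ ({nvec 1 4, nvec 0 2, nvec 0 3, nvec 2 3} :
      Set (Fin 5 → Fin 3 → ℝ))) = 3 := by
  have h23 : nvec 2 3 ∈ Submodule.span ℝ {nvec 1 4, nvec 0 2, nvec 0 3} := by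
    rw [eq_sub_of_add_eq' nvec_1_4_add_nvec_0_2.symm]
    exact sub_mem (add_mem (Submodule.subset_span (by simp)) (Submodule.subset_span (by simp)))
      (Submodule.subset_span (by simp))
  have hli : LinearIndependent ℝ ![nvec 1 4, nvec 0 2, nvec 0 3] := by
    convert linearIndependent_swapEigenbasis.comp ![0, 1, 2] (by decide) using 1
    funext k
    fin_cases k <;> rfl
  have hrange : Set.range ![nvec 1 4, nvec 0 2, nvec 0 3] = {nvec 1 4, nvec 0 2, nvec 0 3} := by
    rw [Matrix.range_cons, Matrix.range_cons_cons_empty, Set.singleton_union]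
  rw [Set.pair_comm, Set.insert_comm (nvec 0 2), Set.insert_comm (nvec 1 4),
    Submodule.span_insert_eq_span h23, ← hrange, finrank_span_eq_card hli, Fintype.card_fin]

/-- For the transposition `π = 15342` (exchanging `2` and `5`; 0-indexed: `swap 1 4`):
`η₅(π)(n_λ) = −n_λ` exactly for the four edges `λ ∈ {25, 13, 14, 34}` and for no other
edge is `η₅(π)(n_λ) = ±n_λ`; these four vectors satisfy `n₂₅ + n₁₃ = n₁₄ + n₃₄` and span
a 3-dimensional subspace; and the trace of `η₅(π)` on the span of all ten `n_λ`
equals `−1`. -/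
theorem transposition_trace_on_normals :
    (eta5fun (Equiv.swap 1 4) (nvec 1 4) = -(nvec 1 4)) ∧
    (eta5fun (Equiv.swap 1 4) (nvec 0 2) = -(nvec 0 2)) ∧
    (eta5fun (Equiv.swap 1 4) (nvec 0 3) = -(nvec 0 3)) ∧
    (eta5fun (Equiv.swap 1 4) (nvec 2 3) = -(nvec 2 3)) ∧
    (∀ p q : Fin 5, p < q →
      ¬((p, q) = (1, 4) ∨ (p, q) = (0, 2) ∨ (p, q) = (0, 3) ∨ (p, q) = (2, 3)) →
      eta5fun (Equiv.swap 1 4) (nvec p q) ≠ nvec p q ∧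
      eta5fun (Equiv.swap 1 4) (nvec p q) ≠ -(nvec p q)) ∧
    (nvec 1 4 + nvec 0 2 = nvec 0 3 + nvec 2 3) ∧
    (Module.finrank ℝ
      (Submodule.span ℝ ({nvec 1 4, nvec 0 2, nvec 0 3, nvec 2 3} :
        Set (Fin 5 → Fin 3 → ℝ))) = 3) ∧
    (∀ h : ∀ v ∈ Nspan, eta5lin (Equiv.swap 1 4) v ∈ Nspan,
      LinearMap.trace ℝ Nspan ((eta5lin (Equiv.swap 1 4)).restrict h) = -1) := by
  obtain ⟨h14, h02, h03, h23⟩ := eta5fun_swap14_nvec_fixed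
  refine ⟨h14, h02, h03, h23, fun p q => eta5fun_swap14_nvec_ne, nvec_1_4_add_nvec_0_2,
    finrank_span_nvec_fixed, fun h => ?_⟩
  rw [trace_restrict_eq_sum_of_eigenvectors h linearIndependent_swapEigenbasis span_swapEigenbasis
    eta5fun_swap14_swapEigenbasis]
  simp [Fin.sum_univ_five]
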